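/- arXiv:1905.10976 — 7 statements merged into one kernel-verified Lean document; each statement's English description precedes it below -/
import Mathlib

section
/- For any sets W, X, Y: W is an evidence of ⟨X,Y⟩ if and only if W is an evidence of ⟨X \ Y, Y⟩ or W is an evidence of ⟨X ∩ Y, Y⟩. (This corresponds to the soundness of the Separation Rule D(X,Y) ↔ D(X\Y,Y) ∨ D(X∩Y,Y).) -/
/-- `W` is an evidence of `⟨X, Y⟩`. -/
def Evidence {α : Type*} (W X Y : Set α) : Prop :=
  (W ∩ X).Nonempty ∧ (W ∩ Y).Nonempty ∧ W ⊆ X ∪ Y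

theorem evidence_separation {α : Type*} (W X Y : Set α) :
    Evidence W X Y ↔ (Evidence W (X \ Y) Y ∨ Evidence W (X ∩ Y) Y) := by
  constructor
  · rintro ⟨⟨a, haW, haX⟩, hY, hsub⟩
    by_cases h : (W ∩ (X \ Y)).Nonempty
    · left
      refine ⟨h, hY, fun w hw => ?_⟩
      rcases hsub hw with hx | hy
      · by_cases hwy : w ∈ Y
        · exact Or.inr hwy
        · exact Or.inl ⟨hx, hwy⟩
      · exact Or.inr hy
    · right
      have haY : a ∈ Y := by
        by_contra hay
        exact h ⟨a, haW, haX, hay⟩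
      refine ⟨⟨a, haW, haX, haY⟩, hY, fun w hw => ?_⟩
      rcases hsub hw with hx | hy
      · by_cases hwy : w ∈ Y
        · exact Or.inr hwy
        · exact absurd ⟨w, hw, hx, hwy⟩ h
      · exact Or.inr hy
  · rintro (⟨⟨a, haW, haX, _⟩, hY, hsub⟩ | ⟨⟨a, haW, haX, _⟩, hY, hsub⟩)
    · exact ⟨⟨a, haW, haX⟩, hY, fun w hw => (hsub hw).imp (fun h => h.1) id⟩
    · exact ⟨⟨a, haW, haX⟩, hY, fun w hw => (hsub hw).imp (fun h => h.1) id⟩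
end

section
/- In any dependence epistemic model M and world s, and for finite sets of variables X, Y: M,s ⊨ D_g(X,Y) if and only if there exist u,v ∈ S with u ≈ v ≈ s such that Δ(u,v) is an evidence of ⟨X,Y⟩ (Evidence Lemma I for D_g). -/
/-- Global dependency modality `D_g(X,Y)` at world `s`. -/
def SatDg {S V : Type*} (U : S → V → ℕ) (approx : S → S → Prop)
    (X Y : Set V) (s : S) : Prop :=
  ∃ u v, approx u v ∧ approx v s ∧ (∀ z, z ∉ X ∪ Y → U u z = U v z) ∧
    (∃ x ∈ X, U u x ≠ U v x) ∧ (∃ y ∈ Y, U u y ≠ U v y)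

open Classical in
/-- `Δ(u,v)` relative to the set of variable names `Vn ⊆ V`. -/
noncomputable def Delta {S V : Type*} (U : S → V → ℕ) (Vn : Set V)
    (u v : S) : Set V :=
  if ∀ y ∉ Vn, U u y = U v y then {x ∈ Vn | U u x ≠ U v x} else ∅

/-- Evidence Lemma I for `D_g`. -/
theorem evidence_lemma_I_Dg {S V : Type*} (U : S → V → ℕ)
    (approx : S → S → Prop) (hequiv : Equivalence approx) (Vn : Set V)
    (s : S) (X Y : Set V) (hX : X ⊆ Vn) (hY : Y ⊆ Vn)
    (hXfin : X.Finite) (hYfin : Y.Finite) :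
    SatDg U approx X Y s ↔
      ∃ u v, approx u v ∧ approx v s ∧ Evidence (Delta U Vn u v) X Y := by
  constructor
  · rintro ⟨u, v, huv, hvs, heq, ⟨x, hx, hxne⟩, ⟨y, hy, hyne⟩⟩
    refine ⟨u, v, huv, hvs, ?_⟩
    have hcond : ∀ z ∉ Vn, U u z = U v z := fun z hz =>
      heq z (fun h => hz (h.elim (fun h => hX h) (fun h => hY h)))
    have hD : Delta U Vn u v = {x ∈ Vn | U u x ≠ U v x} := if_pos hcond
    refine ⟨⟨x, ?_, hx⟩, ⟨y, ?_, hy⟩, ?_⟩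
    · rw [hD]; exact ⟨hX hx, hxne⟩
    · rw [hD]; exact ⟨hY hy, hyne⟩
    · intro z hz
      rw [hD] at hz
      by_contra hmem
      exact hz.2 (heq z hmem)
  · rintro ⟨u, v, huv, hvs, ⟨x, hxD, hx⟩, ⟨y, hyD, hy⟩, hsub⟩
    have hcond : ∀ z ∉ Vn, U u z = U v z := by
      by_contra h
      have : Delta U Vn u v = ∅ := if_neg h
      rw [this] at hxD; exact hxD
    have hD : Delta U Vn u v = {x ∈ Vn | U u x ≠ U v x} := if_pos hcond
    rw [hD] at hxD hyD
    refine ⟨u, v, huv, hvs, ?_, ⟨x, hx, hxD.2⟩, ⟨y, hy, hyD.2⟩⟩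
    intro z hz
    by_contra hne
    by_cases hzVn : z ∈ Vn
    · exact hz (hsub (by rw [hD]; exact ⟨hzVn, hne⟩))
    · exact hne (hcond z hzVn)
end

section
/- Let 𝒫 be a family of subsets of a countable set 𝕍 and s a world with evidence family 𝒫(s) ⊆ 𝒫. Then for any two worlds s, s' (with evidence families 𝒫(s) and 𝒫(s')): the conditions 'every W ∈ 𝒫(s) is generative from 𝒫(s')' and 'every W ∈ 𝒫(s') is generative from 𝒫(s)' hold jointly if and only if for all finite X, Y ⊆ 𝕍, (∃W ∈ 𝒫(s) which is an evidence of ⟨X,Y⟩) ↔ (∃W' ∈ 𝒫(s') which is an evidence of ⟨X,Y⟩). (Equivalence Theorem I, stated abstractly.) -/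
/-- `W` is generative from the family `P`. -/
def Generative {α : Type*} (P : Set (Set α)) (W : Set α) : Prop :=
  W.Nonempty ∧ W.Finite ∧
    ∀ X Y : Set α, X.Finite → Y.Finite → Evidence W X Y →
      ∃ W' ∈ P, Evidence W' X Y

/-- Equivalence Theorem I (abstract form). -/
theorem equivalence_theorem_I {α : Type*} [Countable α]
    (P₁ P₂ : Set (Set α))
    (hP₁ : ∀ W ∈ P₁, W.Nonempty ∧ W.Finite)
    (hP₂ : ∀ W ∈ P₂, W.Nonempty ∧ W.Finite) :
    ((∀ W ∈ P₁, Generative P₂ W) ∧ (∀ W ∈ P₂, Generative P₁ W)) ↔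
      (∀ X Y : Set α, X.Finite → Y.Finite →
        ((∃ W ∈ P₁, Evidence W X Y) ↔ (∃ W' ∈ P₂, Evidence W' X Y))) := by
  constructor
  · rintro ⟨h1, h2⟩ X Y hX hY
    constructor
    · rintro ⟨W, hW, hE⟩
      exact (h1 W hW).2.2 X Y hX hY hE
    · rintro ⟨W, hW, hE⟩
      exact (h2 W hW).2.2 X Y hX hY hE
  · intro h
    constructor
    · intro W hW
      exact ⟨(hP₁ W hW).1, (hP₁ W hW).2,
        fun X Y hX hY hE => (h X Y hX hY).mp ⟨W, hW, hE⟩⟩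
    · intro W hW
      exact ⟨(hP₂ W hW).1, (hP₂ W hW).2,
        fun X Y hX hY hE => (h X Y hX hY).mpr ⟨W, hW, hE⟩⟩
end

section
/- Let 𝒫 be a family of nonempty finite subsets of a set 𝕍 and let 𝔊(𝒫) denote the set of all nonempty finite W ⊆ 𝕍 generative from 𝒫. Then for two families 𝒫₁ and 𝒫₂: 𝔊(𝒫₁) = 𝔊(𝒫₂) if and only if for all finite X, Y ⊆ 𝕍, (∃W ∈ 𝒫₁ an evidence of ⟨X,Y⟩) ↔ (∃W ∈ 𝒫₂ an evidence of ⟨X,Y⟩). (Equivalence Theorem II.) -/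
/-- `𝔊(P)`: the set of all sets generative from `P`. -/
def GenSet {α : Type*} (P : Set (Set α)) : Set (Set α) :=
  {W | Generative P W}

/-- Equivalence Theorem II. -/
theorem equivalence_theorem_II {α : Type*}
    (P₁ P₂ : Set (Set α))
    (hP₁ : ∀ W ∈ P₁, W.Nonempty ∧ W.Finite)
    (hP₂ : ∀ W ∈ P₂, W.Nonempty ∧ W.Finite) :
    GenSet P₁ = GenSet P₂ ↔
      (∀ X Y : Set α, X.Finite → Y.Finite →
        ((∃ W ∈ P₁, Evidence W X Y) ↔ (∃ W ∈ P₂, Evidence W X Y))) := by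
  have key : ∀ (P : Set (Set α)) (hP : ∀ W ∈ P, W.Nonempty ∧ W.Finite),
      ∀ W ∈ P, W ∈ GenSet P := by
    intro P hP W hW
    exact ⟨(hP W hW).1, (hP W hW).2, fun X Y _ _ hE => ⟨W, hW, hE⟩⟩
  constructor
  · intro h X Y hX hY
    constructor
    · rintro ⟨W, hW, hE⟩
      have : W ∈ GenSet P₂ := h ▸ key P₁ hP₁ W hW
      exact this.2.2 X Y hX hY hE
    · rintro ⟨W, hW, hE⟩
      have : W ∈ GenSet P₁ := h.symm ▸ key P₂ hP₂ W hW
      exact this.2.2 X Y hX hY hE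
  · intro h
    ext W
    constructor
    · rintro ⟨h1, h2, h3⟩
      exact ⟨h1, h2, fun X Y hX hY hE => (h X Y hX hY).mp (h3 X Y hX hY hE)⟩
    · rintro ⟨h1, h2, h3⟩
      exact ⟨h1, h2, fun X Y hX hY hE => (h X Y hX hY).mpr (h3 X Y hX hY hE)⟩
end

section
/- Generative Lemma: Let 𝒫 be a family of nonempty finite subsets of 𝕍 and W ⊆ 𝕍 a nonempty finite set. Then W is generative from 𝒫 if and only if: (a) if |W| = 1 then W ∈ 𝒫 or some W' ∈ 𝒫 is an evidence of ⟨W,W⟩; and (b) if |W| ≥ 2 then for every nonempty proper subset Z ⊊ W there exists W' ∈ 𝒫 which is an evidence of ⟨Z, W∖Z⟩. -/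
/-!
Being an evidence is monotone in the pair `⟨X, Y⟩`, and `W` itself is an evidence of every
split `⟨Z, W \ Z⟩`; this gives the forward direction. Conversely, every pair `⟨X, Y⟩` that `W`
is an evidence of lies above such a split: take `Z = W ∩ X`, or `Z = W \ {b}` with `b ∈ W ∩ Y`
when `W ⊆ X`. A singleton `W` has no split, but then `X` and `Y` both contain `W`, so they lie
above `⟨W, W⟩`.
-/

namespace Evidence

variable {α : Type*} {W X Y X' Y' Z : Set α}

theorem mono (h : Evidence W X Y) (hX : X ⊆ X') (hY : Y ⊆ Y') : Evidence W X' Y' :=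
  ⟨h.1.mono (Set.inter_subset_inter_right W hX), h.2.1.mono (Set.inter_subset_inter_right W hY),
    h.2.2.trans (Set.union_subset_union hX hY)⟩

theorem self (hW : W.Nonempty) : Evidence W W W := by
  simpa [Evidence] using hW

theorem sdiff_of_ssubset (hZ : Z.Nonempty) (hZW : Z ⊂ W) : Evidence W Z (W \ Z) := by
  obtain ⟨w, hwW, hwZ⟩ := Set.exists_of_ssubset hZW
  refine ⟨?_, ⟨w, hwW, hwW, hwZ⟩, by simp⟩
  rwa [Set.inter_eq_right.2 hZW.subset]

theorem subset_inter_of_subsingleton (h : Evidence W X Y) (hW : W.Subsingleton) :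
    W ⊆ X ∩ Y := by
  obtain ⟨⟨a, haW, haX⟩, ⟨b, hbW, hbY⟩, -⟩ := h
  intro x hx
  exact ⟨hW hx haW ▸ haX, hW hx hbW ▸ hbY⟩

theorem exists_split (h : Evidence W X Y) (hW : 1 < W.ncard) :
    ∃ Z, Z.Nonempty ∧ Z ⊂ W ∧ Z ⊆ X ∧ W \ Z ⊆ Y := by
  obtain ⟨⟨a, haW, haX⟩, ⟨b, hbW, hbY⟩, hWXY⟩ := h
  by_cases hWX : W ⊆ X
  · obtain ⟨d, hdW, hdb⟩ := Set.exists_ne_of_one_lt_ncard hW b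
    refine ⟨W \ {b}, ⟨d, hdW, hdb⟩, Set.sdiff_singleton_ssubset.2 hbW,
      Set.sdiff_subset.trans hWX, ?_⟩
    rw [Set.sdiff_sdiff_cancel_left (Set.singleton_subset_iff.2 hbW)]
    exact Set.singleton_subset_iff.2 hbY
  · refine ⟨W ∩ X, ⟨a, haW, haX⟩, Set.inter_ssubset_left_iff.2 hWX, Set.inter_subset_right, ?_⟩
    rw [Set.sdiff_self_inter]
    intro x ⟨hxW, hxX⟩
    exact (hWXY hxW).resolve_left hxX

end Evidence

theorem generative_lemma_general {α : Type*} (P : Set (Set α))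
    (W : Set α) (hW : W.Nonempty) (hWfin : W.Finite) :
    Generative P W ↔
      ((W.ncard = 1 → (W ∈ P ∨ ∃ W' ∈ P, Evidence W' W W)) ∧
        (2 ≤ W.ncard → ∀ Z : Set α, Z.Nonempty → Z ⊂ W →
          ∃ W' ∈ P, Evidence W' Z (W \ Z))) := by
  refine ⟨fun ⟨_, _, hgen⟩ => ⟨fun _ => .inr (hgen W W hWfin hWfin (.self hW)),
    fun _ Z hZ hZW => hgen Z (W \ Z) (hWfin.subset hZW.subset) hWfin.sdiff
      (.sdiff_of_ssubset hZ hZW)⟩, ?_⟩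
  rintro ⟨hsingleton, hsplit⟩
  refine ⟨hW, hWfin, fun X Y _ _ hXY => ?_⟩
  obtain hone | htwo : W.ncard = 1 ∨ 2 ≤ W.ncard := by
    have := (Set.ncard_pos hWfin).2 hW
    omega
  · obtain ⟨c, rfl⟩ := Set.ncard_eq_one.1 hone
    have hcXY := hXY.subset_inter_of_subsingleton Set.subsingleton_singleton
    rcases hsingleton hone with hP | ⟨W', hW'P, hW'⟩
    · exact ⟨_, hP, hXY⟩
    · exact ⟨W', hW'P, hW'.mono (hcXY.trans Set.inter_subset_left)
        (hcXY.trans Set.inter_subset_right)⟩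
  · obtain ⟨Z, hZ, hZW, hZX, hWZY⟩ := hXY.exists_split htwo
    obtain ⟨W', hW'P, hW'⟩ := hsplit htwo Z hZ hZW
    exact ⟨W', hW'P, hW'.mono hZX hWZY⟩

/-- Generative Lemma. -/
theorem generative_lemma {α : Type*} (P : Set (Set α))
    (hP : ∀ W ∈ P, W.Nonempty ∧ W.Finite)
    (W : Set α) (hW : W.Nonempty) (hWfin : W.Finite) :
    Generative P W ↔
      ((W.ncard = 1 → (W ∈ P ∨ ∃ W' ∈ P, Evidence W' W W)) ∧
        (2 ≤ W.ncard → ∀ Z : Set α, Z.Nonempty → Z ⊂ W →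
          ∃ W' ∈ P, Evidence W' Z (W \ Z))) :=
  generative_lemma_general P W hW hWfin
end

section
/- Generative Theorem (set-covering form): Let 𝒫 be a family of nonempty finite subsets of 𝕍, W a nonempty finite subset of 𝕍, and Σ = {W' ∈ 𝒫 : W' ⊆ W}. If every W' ∈ 𝒫 that is an evidence of some ⟨Z, W∖Z⟩ with ∅ ≠ Z ⊊ W satisfies W' ⊆ W (which holds automatically when evidences of ⟨Z, W∖Z⟩ are required to be subsets of W), then W is generative from 𝒫 if and only if ⋃Σ = W and for every nonempty proper subset Z ⊊ W there exists W' ∈ Σ with W' ∩ Z ≠ ∅ and W' ∩ (W∖Z) ≠ ∅. -/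
/-- Generative Theorem, set-covering form, with `Σ = {W' ∈ P : W' ⊆ W}`. -/
theorem generative_theorem_covering {α : Type*} (P : Set (Set α))
    (hP : ∀ W' ∈ P, W'.Nonempty ∧ W'.Finite)
    (W : Set α) (hW : W.Nonempty) (hWfin : W.Finite)
    (hsub : ∀ W' ∈ P,
      (∃ Z : Set α, Z.Nonempty ∧ Z ⊂ W ∧ Evidence W' Z (W \ Z)) → W' ⊆ W) :
    Generative P W ↔
      (⋃₀ {W' ∈ P | W' ⊆ W} = W ∧
        ∀ Z : Set α, Z.Nonempty → Z ⊂ W →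
          ∃ W' ∈ {W' ∈ P | W' ⊆ W},
            (W' ∩ Z).Nonempty ∧ (W' ∩ (W \ Z)).Nonempty) := by
  constructor
  · rintro ⟨-, -, hgen⟩
    constructor
    · apply Set.Subset.antisymm
      · rintro x ⟨W', ⟨-, hWsub⟩, hx⟩
        exact hWsub hx
      · intro x hx
        obtain ⟨W', hW'P, ⟨⟨x₁, hx₁W, hx₁⟩, -, hW'sub⟩⟩ :=
          hgen {x} W (Set.finite_singleton x) hWfin
            ⟨⟨x, hx, rfl⟩, ⟨x, hx, hx⟩, fun y hy => Or.inr hy⟩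
        have hsub' : W' ⊆ W := fun y hy => by
          rcases hW'sub hy with h | h
          · cases h; exact hx
          · exact h
        exact ⟨W', ⟨hW'P, hsub'⟩, hx₁ ▸ hx₁W⟩
    · intro Z hZne hZW
      have hZfin : Z.Finite := hWfin.subset hZW.1
      have hWZne : (W \ Z).Nonempty := Set.nonempty_of_ssubset hZW
      have hev : Evidence W Z (W \ Z) := by
        refine ⟨?_, ?_, ?_⟩
        · obtain ⟨z, hz⟩ := hZne
          exact ⟨z, hZW.1 hz, hz⟩
        · obtain ⟨z, hz⟩ := hWZne
          exact ⟨z, hz.1, hz⟩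
        · intro y hy
          by_cases h : y ∈ Z
          · exact Or.inl h
          · exact Or.inr ⟨hy, h⟩
      obtain ⟨W', hW'P, h1, h2, h3⟩ :=
        hgen Z (W \ Z) hZfin (hWfin.subset Set.diff_subset) hev
      exact ⟨W', ⟨hW'P, hsub W' hW'P ⟨Z, hZne, hZW, h1, h2, h3⟩⟩, h1, h2⟩
  · rintro ⟨hcov, hsplit⟩
    refine ⟨hW, hWfin, ?_⟩
    rintro X Y hXfin hYfin ⟨hWX, hWY, hWXY⟩
    by_cases hZW : W ∩ X = W
    · -- W ⊆ X
      obtain ⟨y, hyW, hyY⟩ := hWY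
      have : y ∈ ⋃₀ {W' ∈ P | W' ⊆ W} := by rw [hcov]; exact hyW
      obtain ⟨W', ⟨hW'P, hW'sub⟩, hyW'⟩ := this
      have hW'X : W' ⊆ X := fun z hz => by
        have : z ∈ W ∩ X := by rw [hZW]; exact hW'sub hz
        exact this.2
      exact ⟨W', hW'P, ⟨y, hyW', hW'X hyW'⟩, ⟨y, hyW', hyY⟩,
        fun z hz => Or.inl (hW'X hz)⟩
    · have hss : W ∩ X ⊂ W := ⟨Set.inter_subset_left, fun h => hZW (Set.Subset.antisymm Set.inter_subset_left h)⟩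
      obtain ⟨W', ⟨hW'P, hW'sub⟩, ⟨x, hxW', hxZ⟩, ⟨y, hyW', hyW, hyZ⟩⟩ :=
        hsplit (W ∩ X) hWX hss
      refine ⟨W', hW'P, ⟨x, hxW', hxZ.2⟩, ⟨y, hyW', ?_⟩, ?_⟩
      · rcases hWXY hyW with h | h
        · exact absurd ⟨hyW, h⟩ hyZ
        · exact h
      · intro z hz
        exact hWXY (hW'sub hz)
end

section
/- If W₁ and W₂ are both generative from a family 𝒫 and W₁ ∩ W₂ ≠ ∅, then W₁ ∪ W₂ is generative from 𝒫 (closure of the generative sets under overlapping union). -/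
/-- Closure of the generative sets under overlapping union. -/
theorem generative_union {α : Type*} (P : Set (Set α))
    (hP : ∀ W ∈ P, W.Nonempty ∧ W.Finite)
    (W₁ W₂ : Set α) (h₁ : Generative P W₁) (h₂ : Generative P W₂)
    (hinter : (W₁ ∩ W₂).Nonempty) :
    Generative P (W₁ ∪ W₂) := by
  obtain ⟨hne₁, hfin₁, hgen₁⟩ := h₁
  obtain ⟨hne₂, hfin₂, hgen₂⟩ := h₂
  obtain ⟨z, hz₁, hz₂⟩ := hinter
  refine ⟨hne₁.mono Set.subset_union_left, hfin₁.union hfin₂, ?_⟩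
  intro X Y hX hY ⟨hx, hy, hsub⟩
  have hsub₁ : W₁ ⊆ X ∪ Y := fun a ha => hsub (Or.inl ha)
  have hsub₂ : W₂ ⊆ X ∪ Y := fun a ha => hsub (Or.inr ha)
  by_cases hXY : (W₁ ∩ X).Nonempty ∧ (W₁ ∩ Y).Nonempty
  · exact hgen₁ X Y hX hY ⟨hXY.1, hXY.2, hsub₁⟩
  · rw [not_and_or] at hXY
    cases hXY with
    | inl h =>
      -- W₁ ∩ X = ∅, so W₁ ⊆ Y, hence z ∈ Y, so W₂ meets Y; and W₂ must meet X
      have hW₁Y : W₁ ⊆ Y := by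
        intro a ha
        rcases hsub₁ ha with h' | h'
        · exact absurd ⟨a, ha, h'⟩ h
        · exact h'
      have h2Y : (W₂ ∩ Y).Nonempty := ⟨z, hz₂, hW₁Y hz₁⟩
      have h2X : (W₂ ∩ X).Nonempty := by
        obtain ⟨a, ha, haX⟩ := hx
        cases ha with
        | inl ha => exact absurd ⟨a, ha, haX⟩ h
        | inr ha => exact ⟨a, ha, haX⟩
      exact hgen₂ X Y hX hY ⟨h2X, h2Y, hsub₂⟩
    | inr h =>
      have hW₁X : W₁ ⊆ X := by
        intro a ha
        rcases hsub₁ ha with h' | h'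
        · exact h'
        · exact absurd ⟨a, ha, h'⟩ h
      have h2X : (W₂ ∩ X).Nonempty := ⟨z, hz₂, hW₁X hz₁⟩
      have h2Y : (W₂ ∩ Y).Nonempty := by
        obtain ⟨a, ha, haY⟩ := hy
        cases ha with
        | inl ha => exact absurd ⟨a, ha, haY⟩ h
        | inr ha => exact ⟨a, ha, haY⟩
      exact hgen₂ X Y hX hY ⟨h2X, h2Y, hsub₂⟩
end
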